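/- For any integers r ≥ 2 and k ≥ 2 with (r,k) not equal to (2,2), (2,4), or (2,6), the necklace number N_k^r = (1/k) Σ_{d | k} μ(d) r^(k/d) satisfies N_k^r ≥ r^k/(k+1), i.e., (k+1) Σ_{d | k} μ(d) r^(k/d) ≥ k·r^k. -/

import Mathlib

open ArithmeticFunction ArithmeticFunction.Moebius Finset

lemma geom_bound (r : ℕ) (hr : 2 ≤ r) : ∀ m : ℕ, 1 ≤ m →
    ∑ j ∈ Finset.Icc 1 m, (r:ℤ)^j ≤ 2*(r:ℤ)^m - 2 := by
  intro m hm
  induction m with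
  | zero => omega
  | succ n ih =>
    rcases Nat.eq_or_lt_of_le hm with h | h
    · simp [← h]
      have : (2:ℤ) ≤ (r:ℤ) := by exact_mod_cast hr
      nlinarith
    · have hn : 1 ≤ n := by omega
      rw [Finset.sum_Icc_succ_top (by omega)]
      have hr' : (2:ℤ) ≤ (r:ℤ) := by exact_mod_cast hr
      have hp : (0:ℤ) ≤ (r:ℤ)^n := by positivity
      have := ih hn
      nlinarith [pow_succ (r:ℤ) n]

lemma sumA (r k : ℕ) (hk : 2 ≤ k) :
    (r:ℤ)^k - ∑ j ∈ Finset.Icc 1 (k/2), (r:ℤ)^j ≤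
      ∑ d ∈ k.divisors, (μ d : ℤ) * (r:ℤ)^(k/d) := by
  have hk0 : k ≠ 0 := by omega
  have h1 : 1 ∈ k.divisors := Nat.one_mem_divisors.mpr hk0
  rw [← Finset.add_sum_erase _ _ h1]
  simp only [moebius_apply_one, Nat.div_one, Int.cast_one, one_mul]
  have key : ∑ d ∈ k.divisors.erase 1, (-((μ d : ℤ) * (r:ℤ)^(k/d))) ≤
      ∑ j ∈ Finset.Icc 1 (k/2), (r:ℤ)^j := by
    have step1 : ∑ d ∈ k.divisors.erase 1, (-((μ d : ℤ) * (r:ℤ)^(k/d))) ≤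
        ∑ d ∈ k.divisors.erase 1, (r:ℤ)^(k/d) := by
      apply Finset.sum_le_sum
      intro d _
      have h1 : |(μ d : ℤ)| ≤ 1 := by exact_mod_cast abs_moebius_le_one (n := d)
      have h2 : (0:ℤ) ≤ (r:ℤ)^(k/d) := by positivity
      nlinarith [neg_abs_le ((μ d : ℤ)), abs_nonneg ((μ d : ℤ))]
    have inj : Set.InjOn (fun d => k / d) (k.divisors.erase 1 : Finset ℕ) := by
      intro a ha b hb hab
      have ha' := Finset.mem_erase.mp (Finset.mem_coe.mp ha)
      have hb' := Finset.mem_erase.mp (Finset.mem_coe.mp hb)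
      have e1 := Nat.div_div_self (Nat.mem_divisors.mp ha'.2).1 hk0
      have e2 := Nat.div_div_self (Nat.mem_divisors.mp hb'.2).1 hk0
      have : k / a = k / b := hab
      rw [← e1, ← e2, this]
    have step2 : ∑ d ∈ k.divisors.erase 1, (r:ℤ)^(k/d) =
        ∑ j ∈ (k.divisors.erase 1).image (fun d => k / d), (r:ℤ)^j :=
      (Finset.sum_image (fun a ha b hb h => inj ha hb h)).symm
    have sub : (k.divisors.erase 1).image (fun d => k / d) ⊆ Finset.Icc 1 (k/2) := by
      intro j hj
      simp only [Finset.mem_image, Finset.mem_erase, Nat.mem_divisors] at hj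
      obtain ⟨d, ⟨hd1, hdk, _⟩, rfl⟩ := hj
      have hd0 : d ≠ 0 := by
        rintro rfl
        exact hk0 (Nat.eq_zero_of_zero_dvd hdk)
      have hd2 : 2 ≤ d := by omega
      have hdle : d ≤ k := Nat.le_of_dvd (by omega) hdk
      simp only [Finset.mem_Icc]
      constructor
      · rw [Nat.one_le_div_iff (by omega)]; exact hdle
      · exact Nat.div_le_div_left hd2 (by omega)
    have step3 : ∑ j ∈ (k.divisors.erase 1).image (fun d => k / d), (r:ℤ)^j ≤
        ∑ j ∈ Finset.Icc 1 (k/2), (r:ℤ)^j := by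
      apply Finset.sum_le_sum_of_subset_of_nonneg sub
      intro i _ _; positivity
    linarith [step1, step2 ▸ step3]
  have key' : -∑ d ∈ k.divisors.erase 1, ((μ d : ℤ) * (r:ℤ)^(k/d)) ≤
      ∑ j ∈ Finset.Icc 1 (k/2), (r:ℤ)^j := by
    rw [← Finset.sum_neg_distrib]
    exact key
  linarith

lemma aux_pow : ∀ n : ℕ, 5 ≤ n → 4*n + 2 ≤ 2^n := by
  intro n hn
  induction n with
  | zero => omega
  | succ m ih =>
    rcases Nat.eq_or_lt_of_le hn with h | h
    · have hm : m = 4 := by omega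
      subst hm
      norm_num
    · have hm : 5 ≤ m := by omega
      have h22 : 22 ≤ 2^m := le_trans (by omega) (ih hm)
      have := ih hm
      rw [pow_succ]
      omega

lemma two_bound (k : ℕ) (h : k = 7 ∨ 9 ≤ k) : 2*(k+1) ≤ 2^(k - k/2) := by
  rcases h with rfl | h
  · norm_num
  · have h1 : k ≤ 2 * (k - k/2) := by omega
    have h2 : 5 ≤ k - k/2 := by omega
    calc 2*(k+1) ≤ 4*(k - k/2) + 2 := by omega
    _ ≤ 2^(k - k/2) := aux_pow _ h2

lemma pstep (c x : ℤ) (hc : 0 ≤ c) (h : c ≤ x) (n : ℕ) : c * x^n ≤ x^(n+1) := by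
  rw [pow_succ]
  have hx : (0:ℤ) ≤ x^n := pow_nonneg (le_trans hc h) n
  nlinarith

lemma lemB (r k : ℕ) (hr : 2 ≤ r) (hk : 2 ≤ k)
    (hx : r = 2 → k = 3 ∨ k = 7 ∨ 9 ≤ k) :
    ((k:ℤ)+1) * ∑ j ∈ Finset.Icc 1 (k/2), (r:ℤ)^j ≤ (r:ℤ)^k := by
  have hrz : (2:ℤ) ≤ (r:ℤ) := by exact_mod_cast hr
  by_cases h9 : k = 7 ∨ 9 ≤ k
  · have hm1 : 1 ≤ k/2 := by omega
    have hG := geom_bound r hr (k/2) hm1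
    have hb : ((2*(k+1) : ℕ) : ℤ) ≤ ((2^(k - k/2) : ℕ) : ℤ) := by
      exact_mod_cast two_bound k h9
    push_cast at hb
    have hpow : (2:ℤ)^(k - k/2) ≤ (r:ℤ)^(k - k/2) :=
      pow_le_pow_left₀ (by norm_num) hrz _
    have hP : (0:ℤ) ≤ (r:ℤ)^(k/2) := by positivity
    have hsplit : (r:ℤ)^(k - k/2) * (r:ℤ)^(k/2) = (r:ℤ)^k := by
      rw [← pow_add]
      congr 1
      omega
    have hk1 : (0:ℤ) < (k:ℤ) + 1 := by positivity
    nlinarith [mul_le_mul_of_nonneg_right hpow hP, mul_le_mul_of_nonneg_right hb hP]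
  · have hk8 : k ≤ 8 := by omega
    have hr3 : k ≠ 3 → (3:ℤ) ≤ (r:ℤ) := by
      intro hk3
      have : 3 ≤ r := by
        rcases Nat.eq_or_lt_of_le hr with h | h
        · rcases hx h.symm with h'|h'|h' <;> omega
        · exact h
      exact_mod_cast this
    interval_cases k
    · have h3 := hr3 (by norm_num)
      rw [show Finset.Icc 1 (2/2) = {1} from by decide]
      norm_num
      nlinarith [pstep 3 (r:ℤ) (by norm_num) h3 1]
    · rw [show Finset.Icc 1 (3/2) = {1} from by decide]
      norm_num
      nlinarith [pstep 2 (r:ℤ) (by norm_num) hrz 1, pstep 2 (r:ℤ) (by norm_num) hrz 2]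
    · have h3 := hr3 (by norm_num)
      rw [show Finset.Icc 1 (4/2) = {1,2} from by decide]
      norm_num [Finset.sum_insert]
      have t1 : 3*(r:ℤ) ≤ (r:ℤ)^2 := by simpa using pstep 3 (r:ℤ) (by norm_num) h3 1
      have t2 : 3*(r:ℤ)^2 ≤ (r:ℤ)^3 := by simpa using pstep 3 (r:ℤ) (by norm_num) h3 2
      have t3 : 3*(r:ℤ)^3 ≤ (r:ℤ)^4 := by simpa using pstep 3 (r:ℤ) (by norm_num) h3 3
      have hp : (0:ℤ) ≤ (r:ℤ)^2 := pow_nonneg (by linarith) 2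
      linarith [t1, t2, t3, hp]
    · have h3 := hr3 (by norm_num)
      rw [show Finset.Icc 1 (5/2) = {1,2} from by decide]
      norm_num [Finset.sum_insert]
      have t1 : 3*(r:ℤ) ≤ (r:ℤ)^2 := by simpa using pstep 3 (r:ℤ) (by norm_num) h3 1
      have t2 : 3*(r:ℤ)^2 ≤ (r:ℤ)^3 := by simpa using pstep 3 (r:ℤ) (by norm_num) h3 2
      have t3 : 3*(r:ℤ)^3 ≤ (r:ℤ)^4 := by simpa using pstep 3 (r:ℤ) (by norm_num) h3 3
      have t4 : 3*(r:ℤ)^4 ≤ (r:ℤ)^5 := by simpa using pstep 3 (r:ℤ) (by norm_num) h3 4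
      have hp : (0:ℤ) ≤ (r:ℤ)^2 := pow_nonneg (by linarith) 2
      linarith [t1, t2, t3, t4, hp]
    · have h3 := hr3 (by norm_num)
      rw [show Finset.Icc 1 (6/2) = {1,2,3} from by decide]
      norm_num [Finset.sum_insert]
      have t1 : 3*(r:ℤ) ≤ (r:ℤ)^2 := by simpa using pstep 3 (r:ℤ) (by norm_num) h3 1
      have t2 : 3*(r:ℤ)^2 ≤ (r:ℤ)^3 := by simpa using pstep 3 (r:ℤ) (by norm_num) h3 2
      have t3 : 3*(r:ℤ)^3 ≤ (r:ℤ)^4 := by simpa using pstep 3 (r:ℤ) (by norm_num) h3 3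
      have t4 : 3*(r:ℤ)^4 ≤ (r:ℤ)^5 := by simpa using pstep 3 (r:ℤ) (by norm_num) h3 4
      have t5 : 3*(r:ℤ)^5 ≤ (r:ℤ)^6 := by simpa using pstep 3 (r:ℤ) (by norm_num) h3 5
      have hp : (0:ℤ) ≤ (r:ℤ)^3 := pow_nonneg (by linarith) 3
      linarith [t1, t2, t3, t4, t5, hp]
    · omega
    · have h3 := hr3 (by norm_num)
      rw [show Finset.Icc 1 (8/2) = {1,2,3,4} from by decide]
      norm_num [Finset.sum_insert]
      have t1 : 3*(r:ℤ) ≤ (r:ℤ)^2 := by simpa using pstep 3 (r:ℤ) (by norm_num) h3 1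
      have t2 : 3*(r:ℤ)^2 ≤ (r:ℤ)^3 := by simpa using pstep 3 (r:ℤ) (by norm_num) h3 2
      have t3 : 3*(r:ℤ)^3 ≤ (r:ℤ)^4 := by simpa using pstep 3 (r:ℤ) (by norm_num) h3 3
      have t4 : 3*(r:ℤ)^4 ≤ (r:ℤ)^5 := by simpa using pstep 3 (r:ℤ) (by norm_num) h3 4
      have t5 : 3*(r:ℤ)^5 ≤ (r:ℤ)^6 := by simpa using pstep 3 (r:ℤ) (by norm_num) h3 5
      have t6 : 3*(r:ℤ)^6 ≤ (r:ℤ)^7 := by simpa using pstep 3 (r:ℤ) (by norm_num) h3 6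
      have t7 : 3*(r:ℤ)^7 ≤ (r:ℤ)^8 := by simpa using pstep 3 (r:ℤ) (by norm_num) h3 7
      have hp : (0:ℤ) ≤ (r:ℤ)^4 := pow_nonneg (by linarith) 4
      linarith [t1, t2, t3, t4, t5, t6, t7, hp]

open ArithmeticFunction ArithmeticFunction.Moebius in
theorem necklace_lower_bound (r k : ℕ) (hr : 2 ≤ r) (hk : 2 ≤ k)
    (hexc : ¬ (r = 2 ∧ (k = 2 ∨ k = 4 ∨ k = 6))) :
    (k : ℤ) * (r : ℤ) ^ k ≤ (k + 1 : ℤ) * ∑ d ∈ k.divisors, (μ d : ℤ) * (r : ℤ) ^ (k / d) := by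
  by_cases h25 : r = 2 ∧ k = 5
  · obtain ⟨rfl, rfl⟩ := h25
    rw [show (5:ℕ).divisors = {1,5} from by decide]
    rw [Finset.sum_insert (by decide), Finset.sum_singleton]
    rw [moebius_apply_one, moebius_apply_prime (by norm_num)]
    norm_num
  by_cases h28 : r = 2 ∧ k = 8
  · obtain ⟨rfl, rfl⟩ := h28
    rw [show (8:ℕ).divisors = {1,2,4,8} from by decide]
    rw [Finset.sum_insert (by decide), Finset.sum_insert (by decide),
        Finset.sum_insert (by decide), Finset.sum_singleton]
    rw [moebius_apply_one, moebius_apply_prime Nat.prime_two,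
        moebius_eq_zero_of_not_squarefree (by decide),
        moebius_eq_zero_of_not_squarefree (by decide)]
    norm_num
  · have hx : r = 2 → k = 3 ∨ k = 7 ∨ 9 ≤ k := by
      intro h2
      subst h2
      have e1 : ¬ (k = 2 ∨ k = 4 ∨ k = 6) := fun h => hexc ⟨rfl, h⟩
      have e2 : k ≠ 5 := fun h => h25 ⟨rfl, h⟩
      have e3 : k ≠ 8 := fun h => h28 ⟨rfl, h⟩
      omega
    have hA := sumA r k hk
    have hB := lemB r k hr hk hx
    have hknn : (0:ℤ) ≤ (k:ℤ) + 1 := by positivity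
    nlinarith [mul_le_mul_of_nonneg_left hA hknn]
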